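/- For all x, y ∈ ℂ with |x| < 1, the summation formula holds: Φ₁(a, b; c; q; x, y) = ∑_{n=0}^∞ ((a;q)_n (b;q)_n / ((c;q)_n (q;q)_n)) x^n · ∑_{k=0}^∞ ((a q^n;q)_k / ((c q^n;q)_k (q;q)_k)) y^k; that is, Φ₁ equals the series in x whose n-th coefficient is the basic hypergeometric series ₂Φ₁(a q^n, 0; c q^n; q, y). -/

import Mathlib

open scoped BigOperators

noncomputable section

/-- The q-shifted factorial `(a;q)_n = ∏_{r=0}^{n-1} (1 - a q^r)`. -/
def qPoch (q a : ℂ) (n : ℕ) : ℂ := ∏ r ∈ Finset.range n, (1 - a * q ^ r)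

/-- The basic Humbert function `Φ₁(a,b;c;q;x,y)` as a double series over `ℕ × ℕ`. -/
def Phi1 (q a b c x y : ℂ) : ℂ :=
  ∑' p : ℕ × ℕ,
    qPoch q a (p.1 + p.2) * qPoch q b p.1 * x ^ p.1 * y ^ p.2 /
      (qPoch q c (p.1 + p.2) * qPoch q q p.1 * qPoch q q p.2)

/-- The basic Humbert function `Φ₂(a,b;c;q;x,y)` as a double series over `ℕ × ℕ`. -/
def Phi2 (q a b c x y : ℂ) : ℂ :=
  ∑' p : ℕ × ℕ,
    qPoch q a p.1 * qPoch q b p.2 * x ^ p.1 * y ^ p.2 /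
      (qPoch q c (p.1 + p.2) * qPoch q q p.1 * qPoch q q p.2)

/-- The basic Humbert function `Φ₃(a;b;q;x,y)` as a double series over `ℕ × ℕ`. -/
def Phi3 (q a b x y : ℂ) : ℂ :=
  ∑' p : ℕ × ℕ,
    qPoch q a p.1 * x ^ p.1 * y ^ p.2 /
      (qPoch q b (p.1 + p.2) * qPoch q q p.1 * qPoch q q p.2)

/-- The one-variable q-difference operator. -/
def qDiff (q : ℂ) (f : ℂ → ℂ) : ℂ → ℂ := fun x => (f x - f (q * x)) / ((1 - q) * x)

/-- The q-difference operator in the first variable of a two-variable function. -/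
def qDx (q : ℂ) (f : ℂ → ℂ → ℂ) : ℂ → ℂ → ℂ :=
  fun x y => (f x y - f (q * x) y) / ((1 - q) * x)

/-- The q-difference operator in the second variable of a two-variable function. -/
def qDy (q : ℂ) (f : ℂ → ℂ → ℂ) : ℂ → ℂ → ℂ :=
  fun x y => (f x y - f x (q * y)) / ((1 - q) * y)

/-- The infinite q-shifted factorial `(a;q)_∞ = ∏_{r=0}^∞ (1 - a q^r)`. -/
def qPochInf (q a : ℂ) : ℂ := ∏' r : ℕ, (1 - a * q ^ r)

/-!
Since `(a;q)_{n+k} = (a;q)_n (a q^n;q)_k`, and likewise for `c`, the `(n, k)` term of `Φ₁` is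
the `n`-th coefficient times the `k`-th term of `₂Φ₁(a q^n, 0; c q^n; q, y)`; summing over `k`
first gives the formula whenever the double series is summable. As `tsum` is `0` on divergent
series, the remaining case needs an argument too: the double series converges if `‖y‖ < 1` or if
some factor `1 - a q^r` vanishes, and otherwise `‖y‖ ≥ 1` while the coefficients of every inner
series tend to the nonzero limit `(a q^n;q)_∞ / ((c q^n;q)_∞ (q;q)_∞)`, so both sides are `0`.
-/

open Filter Topology

section QPochhammer

variable {q : ℂ}

lemma qPoch_add (q a : ℂ) (n k : ℕ) :
    qPoch q a (n + k) = qPoch q a n * qPoch q (a * q ^ n) k := by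
  simp only [qPoch, Finset.prod_range_add, mul_assoc, pow_add]

lemma qPoch_eq_zero_of_lt {a : ℂ} {s m : ℕ} (hs : 1 - a * q ^ s = 0) (hm : s < m) :
    qPoch q a m = 0 :=
  Finset.prod_eq_zero (Finset.mem_range.2 hm) hs

lemma one_sub_mul_pow_mul_pow_ne_zero {a : ℂ} (ha : ∀ r : ℕ, 1 - a * q ^ r ≠ 0) (n r : ℕ) :
    1 - a * q ^ n * q ^ r ≠ 0 := by
  rw [mul_assoc, ← pow_add]
  exact ha (n + r)

lemma one_sub_mul_pow_ne_zero_of_ne_zpow {c : ℂ} (hc : ∀ m : ℕ, c ≠ q ^ (-(m : ℤ))) (r : ℕ) :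
    1 - c * q ^ r ≠ 0 := by
  intro h
  apply hc r
  rw [zpow_neg, zpow_natCast]
  exact eq_inv_of_mul_eq_one_left (sub_eq_zero.1 h).symm

lemma one_sub_self_mul_pow_ne_zero (hq : ‖q‖ < 1) (r : ℕ) : 1 - q * q ^ r ≠ 0 := by
  rw [← pow_succ', sub_ne_zero]
  intro h
  have := congrArg norm h
  rw [norm_one, norm_pow] at this
  exact (pow_lt_one₀ (norm_nonneg q) hq r.succ_ne_zero).ne' this

variable (hq : ‖q‖ < 1)
include hq

lemma summable_norm_neg_mul_pow (a : ℂ) : Summable fun r : ℕ => ‖-(a * q ^ r)‖ := by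
  simpa [norm_mul, norm_pow] using
    (summable_geometric_of_lt_one (norm_nonneg q) hq).mul_left ‖a‖

lemma tendsto_qPoch_qPochInf (a : ℂ) :
    Tendsto (qPoch q a) atTop (𝓝 (qPochInf q a)) := by
  have :=
    (multipliable_one_add_of_summable (summable_norm_neg_mul_pow hq a)).tendsto_prod_tprod_nat
  simp only [← sub_eq_add_neg] at this
  exact this

lemma qPochInf_ne_zero {a : ℂ} (ha : ∀ r : ℕ, 1 - a * q ^ r ≠ 0) : qPochInf q a ≠ 0 := by
  have := tprod_one_add_ne_zero_of_summable (by simpa only [← sub_eq_add_neg] using ha)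
    (summable_norm_neg_mul_pow hq a)
  simp only [← sub_eq_add_neg] at this
  exact this

lemma exists_norm_qPoch_le (a : ℂ) : ∃ C > 0, ∀ n, ‖qPoch q a n‖ ≤ C := by
  obtain ⟨C, hC0, hC⟩ :=
    (Metric.isBounded_range_of_tendsto _ (tendsto_qPoch_qPochInf hq a)).exists_pos_norm_le
  exact ⟨C, hC0, fun n => hC _ ⟨n, rfl⟩⟩

lemma exists_norm_inv_qPoch_le {a : ℂ} (ha : ∀ r : ℕ, 1 - a * q ^ r ≠ 0) :
    ∃ C > 0, ∀ n, ‖(qPoch q a n)⁻¹‖ ≤ C := by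
  obtain ⟨C, hC0, hC⟩ := (Metric.isBounded_range_of_tendsto _
    ((tendsto_qPoch_qPochInf hq a).inv₀ (qPochInf_ne_zero hq ha))).exists_pos_norm_le
  exact ⟨C, hC0, fun n => hC _ ⟨n, rfl⟩⟩

end QPochhammer

section Phi1

variable {q a b c x y : ℂ}

def phi1Term (q a b c x y : ℂ) (p : ℕ × ℕ) : ℂ :=
  qPoch q a (p.1 + p.2) * qPoch q b p.1 * x ^ p.1 * y ^ p.2 /
    (qPoch q c (p.1 + p.2) * qPoch q q p.1 * qPoch q q p.2)

def phi21Term (q a c y : ℂ) (k : ℕ) : ℂ :=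
  qPoch q a k * y ^ k / (qPoch q c k * qPoch q q k)

lemma phi1Term_eq_mul_phi21Term (n k : ℕ) :
    phi1Term q a b c x y (n, k) =
      qPoch q a n * qPoch q b n / (qPoch q c n * qPoch q q n) * x ^ n *
        phi21Term q (a * q ^ n) (c * q ^ n) y k := by
  rw [phi1Term, phi21Term, qPoch_add q a, qPoch_add q c]
  ring

lemma summable_phi1Term_of_one_sub_mul_pow_eq_zero {s : ℕ} (hs : 1 - a * q ^ s = 0) :
    Summable (phi1Term q a b c x y) := by
  refine summable_of_ne_finset_zero (s := Finset.range (s + 1) ×ˢ Finset.range (s + 1))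
    fun p hp => ?_
  have hsp : s < p.1 + p.2 := by
    simp only [Finset.mem_product, Finset.mem_range, not_and_or, not_lt] at hp
    omega
  rw [phi1Term, qPoch_eq_zero_of_lt hs hsp, zero_mul, zero_mul, zero_mul, zero_div]

lemma summable_phi1Term (hq : ‖q‖ < 1) (hc : ∀ r : ℕ, 1 - c * q ^ r ≠ 0) (hx : ‖x‖ < 1)
    (hy : ‖y‖ < 1) : Summable (phi1Term q a b c x y) := by
  obtain ⟨Ca, hCa0, hCa⟩ := exists_norm_qPoch_le hq a
  obtain ⟨Cb, hCb0, hCb⟩ := exists_norm_qPoch_le hq b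
  obtain ⟨Cc, hCc0, hCc⟩ := exists_norm_inv_qPoch_le hq hc
  obtain ⟨Cq, hCq0, hCq⟩ := exists_norm_inv_qPoch_le hq (one_sub_self_mul_pow_ne_zero hq)
  have hgeom : Summable fun p : ℕ × ℕ => ‖x‖ ^ p.1 * ‖y‖ ^ p.2 :=
    (summable_geometric_of_lt_one (norm_nonneg x) hx).mul_of_nonneg
      (summable_geometric_of_lt_one (norm_nonneg y) hy) (fun n => by positivity)
      (fun k => by positivity)
  refine Summable.of_norm_bounded (hgeom.mul_left (Ca * Cb * (Cc * Cq * Cq))) fun p => ?_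
  calc ‖phi1Term q a b c x y p‖
      = ‖qPoch q a (p.1 + p.2)‖ * ‖qPoch q b p.1‖ * (‖(qPoch q c (p.1 + p.2))⁻¹‖ *
          ‖(qPoch q q p.1)⁻¹‖ * ‖(qPoch q q p.2)⁻¹‖) * (‖x‖ ^ p.1 * ‖y‖ ^ p.2) := by
        simp only [phi1Term, div_eq_mul_inv, mul_inv, norm_mul, norm_pow]
        ring
    _ ≤ Ca * Cb * (Cc * Cq * Cq) * (‖x‖ ^ p.1 * ‖y‖ ^ p.2) := by
        gcongr
        exacts [hCa _, hCb _, hCc _, hCq _, hCq _]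

lemma not_summable_phi21Term (hq : ‖q‖ < 1) (ha : ∀ r : ℕ, 1 - a * q ^ r ≠ 0)
    (hc : ∀ r : ℕ, 1 - c * q ^ r ≠ 0) (hy : 1 ≤ ‖y‖) : ¬ Summable (phi21Term q a c y) := by
  intro hsum
  set P : ℕ → ℂ := fun k => qPoch q a k / (qPoch q c k * qPoch q q k)
  set L := qPochInf q a / (qPochInf q c * qPochInf q q)
  have hden : qPochInf q c * qPochInf q q ≠ 0 :=
    mul_ne_zero (qPochInf_ne_zero hq hc) (qPochInf_ne_zero hq (one_sub_self_mul_pow_ne_zero hq))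
  have hL : L ≠ 0 := div_ne_zero (qPochInf_ne_zero hq ha) hden
  have hP : Tendsto P atTop (𝓝 L) :=
    (tendsto_qPoch_qPochInf hq a).div
      ((tendsto_qPoch_qPochInf hq c).mul (tendsto_qPoch_qPochInf hq q)) hden
  have hpow : Tendsto (fun k => y ^ k) atTop (𝓝 0) := by
    have := hsum.tendsto_atTop_zero.div hP hL
    rw [zero_div] at this
    refine this.congr' ((hP.eventually_ne hL).mono fun k hk => ?_)
    simp only [Pi.div_apply, phi21Term, P, div_ne_zero_iff, mul_ne_zero_iff] at hk ⊢
    obtain ⟨ha₀, hc₀, hq₀⟩ := hk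
    field_simp
  have := ge_of_tendsto' hpow.norm fun k => by rw [norm_pow]; exact one_le_pow₀ hy
  norm_num at this

end Phi1

theorem phi1_summation_general (q a b c : ℂ) (hq1 : ‖q‖ < 1)
    (hc : ∀ m : ℕ, c ≠ q ^ (-(m : ℤ))) (x y : ℂ) (hx : ‖x‖ < 1) :
    Phi1 q a b c x y =
      ∑' n : ℕ,
        qPoch q a n * qPoch q b n / (qPoch q c n * qPoch q q n) * x ^ n *
          ∑' k : ℕ, qPoch q (a * q ^ n) k * y ^ k / (qPoch q (c * q ^ n) k * qPoch q q k) := by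
  change ∑' p, phi1Term q a b c x y p =
    ∑' n : ℕ, qPoch q a n * qPoch q b n / (qPoch q c n * qPoch q q n) * x ^ n *
      ∑' k : ℕ, phi21Term q (a * q ^ n) (c * q ^ n) y k
  have hc' := one_sub_mul_pow_ne_zero_of_ne_zpow hc
  by_cases hsum : Summable (phi1Term q a b c x y)
  · rw [hsum.tsum_prod]
    refine tsum_congr fun n => ?_
    simp only [phi1Term_eq_mul_phi21Term]
    exact tsum_mul_left
  have ha : ∀ r : ℕ, 1 - a * q ^ r ≠ 0 := fun r hr =>
    hsum (summable_phi1Term_of_one_sub_mul_pow_eq_zero hr)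
  have hy : 1 ≤ ‖y‖ := not_lt.1 fun hy => hsum (summable_phi1Term hq1 hc' hx hy)
  have hinner (n : ℕ) : ∑' k, phi21Term q (a * q ^ n) (c * q ^ n) y k = 0 :=
    tsum_eq_zero_of_not_summable <| not_summable_phi21Term hq1
      (one_sub_mul_pow_mul_pow_ne_zero ha n) (one_sub_mul_pow_mul_pow_ne_zero hc' n) hy
  simp only [tsum_eq_zero_of_not_summable hsum, hinner, mul_zero, tsum_zero]

/-- summation formula expressing Φ₁ as a series whose n-th coefficient is
`₂Φ₁(a q^n, 0; c q^n; q, y)`. -/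
theorem phi1_summation (q a b c : ℂ) (hq0 : 0 < ‖q‖) (hq1 : ‖q‖ < 1)
    (hc : ∀ m : ℕ, c ≠ q ^ (-(m : ℤ))) (x y : ℂ) (hx : ‖x‖ < 1) :
    Phi1 q a b c x y =
      ∑' n : ℕ,
        qPoch q a n * qPoch q b n / (qPoch q c n * qPoch q q n) * x ^ n *
          ∑' k : ℕ, qPoch q (a * q ^ n) k * y ^ k / (qPoch q (c * q ^ n) k * qPoch q q k) :=
  phi1_summation_general q a b c hq1 hc x y hx
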